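/- arXiv:2007.13240 — 4 statements merged into one kernel-verified Lean document; each statement's English description precedes it below -/
import Mathlib

section
/- For every sequence of n independent nonnegative real-valued random variables v_1,...,v_n, if t is a threshold such that the probability that no v_i is at least t equals 1/2, then the stopping rule that accepts the first prize with value at least t obtains expected value at least (1/2)·E[max_i v_i]. -/
open MeasureTheory ProbabilityTheory

/-!
Write `x⁺ = max x 0`. Pointwise, `max_i v_i ≤ t + ∑ i, (v_i - t)⁺`, while the threshold rule earns
`t` whenever it stops plus `(v_i - t)⁺` on the event `B_i` that it has not stopped before `i`.
Since `B_i` only depends on the `v_j` with `j < i`, independence gives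
`E[payoff] = t · P(stop) + ∑ i, P(B_i) · E[(v_i - t)⁺]`, and `P(stop) = 1/2 ≤ P(B_i)`.
-/

/-- The value obtained by the `t`-threshold stopping rule: accept the first prize `i`
with `v i ≥ t` (obtaining `v i`), and obtain `0` if no prize meets the threshold. -/
noncomputable def thresholdPayoff {Ω : Type*} {n : ℕ} (t : ℝ) (v : Fin n → Ω → ℝ) (ω : Ω) : ℝ :=
  if h : ∃ k, t ≤ v k ω then v (Fin.find (fun i => t ≤ v i ω) h) ω else 0

theorem Finset.sup'_le_add_sum_max_sub {ι : Type*} (s : Finset ι) (hs : s.Nonempty)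
    (f : ι → ℝ) (t : ℝ) : s.sup' hs f ≤ t + ∑ i ∈ s, max (f i - t) 0 :=
  Finset.sup'_le hs f fun i hi => by
    have := Finset.single_le_sum (f := fun i => max (f i - t) 0)
      (fun j _ => le_max_right _ _) hi
    linarith [le_max_left (f i - t) 0]

section ThresholdRule

variable {Ω : Type*} {n : ℕ}

def notStoppedBefore (t : ℝ) (v : Fin n → Ω → ℝ) (i : Fin n) : Set Ω :=
  {ω | ∀ j < i, v j ω < t}

theorem thresholdPayoff_eq_indicator_add_sum (t : ℝ) (v : Fin n → Ω → ℝ) (ω : Ω) :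
    thresholdPayoff t v ω = {ω | ∃ i, t ≤ v i ω}.indicator (fun _ => t) ω +
      ∑ i, (notStoppedBefore t v i).indicator (fun ω => max (v i ω - t) 0) ω := by
  classical
  unfold thresholdPayoff
  split_ifs with hstop
  · set i := Fin.find (fun i => t ≤ v i ω) hstop
    have hi : t ≤ v i ω := Fin.find_spec hstop
    have hsum : ∑ j, (notStoppedBefore t v j).indicator (fun ω => max (v j ω - t) 0) ω
        = max (v i ω - t) 0 := by
      rw [Finset.sum_eq_single i]
      · exact Set.indicator_of_mem
          (show ω ∈ notStoppedBefore t v i from fun j hj => not_le.1 (Fin.find_min hstop hj)) _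
      · intro j _ hji
        rcases lt_or_gt_of_ne hji with hlt | hgt
        · simp [(not_le.1 (Fin.find_min hstop hlt)).le]
        · exact Set.indicator_of_notMem (fun h => (h i hgt).not_ge hi) _
      · simp
    rw [Set.indicator_of_mem (show ω ∈ {ω | ∃ i, t ≤ v i ω} from hstop), hsum,
      max_eq_left (sub_nonneg.2 hi)]
    ring
  · push Not at hstop
    have hsum : ∀ i, (notStoppedBefore t v i).indicator (fun ω => max (v i ω - t) 0) ω = 0 :=
      fun i => by simp [(hstop i).le]
    simp [hstop, hsum]

theorem measurableSet_notStoppedBefore {t : ℝ} {v : Fin n → Ω → ℝ} (i : Fin n) :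
    MeasurableSet[⨆ j ∈ Set.Iio i, MeasurableSpace.comap (v j) inferInstance]
      (notStoppedBefore t v i) := by
  have : notStoppedBefore t v i = ⋂ j ∈ Set.Iio i, v j ⁻¹' Set.Iio t := by
    ext ω; simp [notStoppedBefore]
  rw [this]
  refine MeasurableSet.biInter (Set.to_countable _) fun j hj => ?_
  exact le_iSup₂ (f := fun j (_ : j ∈ Set.Iio i) => MeasurableSpace.comap (v j) inferInstance)
    j hj _ ⟨_, measurableSet_Iio, rfl⟩

variable [MeasurableSpace Ω] {t : ℝ} {v : Fin n → Ω → ℝ} {μ : Measure Ω}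

theorem setIntegral_notStoppedBefore (hmeas : ∀ i, Measurable (v i)) (hindep : iIndepFun v μ)
    (i : Fin n) :
    ∫ ω in notStoppedBefore t v i, max (v i ω - t) 0 ∂μ =
      μ.real (notStoppedBefore t v i) * ∫ ω, max (v i ω - t) 0 ∂μ := by
  have hle : ∀ j, MeasurableSpace.comap (v j) inferInstance ≤ ‹MeasurableSpace Ω› :=
    fun j => (hmeas j).comap_le
  have hpast : Indep (⨆ j ∈ Set.Iio i, MeasurableSpace.comap (v j) inferInstance)
      (MeasurableSpace.comap (v i) inferInstance) μ := by
    have := indep_iSup_of_disjoint hle hindep.iIndep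
      (Set.disjoint_singleton_right.2 (lt_irrefl i) : Disjoint (Set.Iio i) {i})
    rwa [iSup_singleton] at this
  exact hpast.setIntegral_eq_mul (iSup₂_le fun j _ => hle j) (hmeas i).aemeasurable
    (measurableSet_notStoppedBefore i)
    ((continuous_sub_right t).max continuous_const).aestronglyMeasurable

theorem integral_thresholdPayoff [IsFiniteMeasure μ] (hmeas : ∀ i, Measurable (v i))
    (hindep : iIndepFun v μ) (hint : ∀ i, Integrable (v i) μ) :
    ∫ ω, thresholdPayoff t v ω ∂μ = t * μ.real {ω | ∃ i, t ≤ v i ω} +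
      ∑ i, μ.real (notStoppedBefore t v i) * ∫ ω, max (v i ω - t) 0 ∂μ := by
  have hstop : MeasurableSet {ω | ∃ i, t ≤ v i ω} := by
    simp only [Set.ofPred_exists]
    exact MeasurableSet.iUnion fun i => measurableSet_le measurable_const (hmeas i)
  have hnot : ∀ i, MeasurableSet (notStoppedBefore t v i) := fun i =>
    iSup₂_le (fun j _ => (hmeas j).comap_le) _ (measurableSet_notStoppedBefore i)
  have hsurplus : ∀ i, Integrable (fun ω => max (v i ω - t) 0) μ := fun i =>
    ((hint i).sub (integrable_const t)).pos_part
  rw [integral_congr_ae (.of_forall (thresholdPayoff_eq_indicator_add_sum t v)),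
    integral_add ((integrable_const t).indicator hstop)
      (integrable_finsetSum _ fun i _ => (hsurplus i).indicator (hnot i)),
    integral_indicator_const _ hstop,
    integral_finsetSum _ fun i _ => (hsurplus i).indicator (hnot i)]
  simp only [integral_indicator (hnot _), setIntegral_notStoppedBefore hmeas hindep, smul_eq_mul,
    mul_comm]

theorem integral_sup'_le_add_sum [IsProbabilityMeasure μ] {ι : Type*} {s : Finset ι}
    (hs : s.Nonempty) {X : ι → Ω → ℝ} (hsup : Integrable (fun ω => s.sup' hs fun i => X i ω) μ)
    (hint : ∀ i, Integrable (X i) μ) (t : ℝ) :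
    ∫ ω, s.sup' hs (fun i => X i ω) ∂μ ≤ t + ∑ i ∈ s, ∫ ω, max (X i ω - t) 0 ∂μ := by
  have hsurplus : ∀ i, Integrable (fun ω => max (X i ω - t) 0) μ := fun i =>
    ((hint i).sub (integrable_const t)).pos_part
  calc ∫ ω, s.sup' hs (fun i => X i ω) ∂μ
      ≤ ∫ ω, (t + ∑ i ∈ s, max (X i ω - t) 0) ∂μ :=
        integral_mono hsup ((integrable_const t).add (integrable_finsetSum _ fun i _ => hsurplus i))
          fun ω => s.sup'_le_add_sum_max_sub hs _ t
    _ = t + ∑ i ∈ s, ∫ ω, max (X i ω - t) 0 ∂μ := by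
        rw [integral_add (integrable_const t) (integrable_finsetSum _ fun i _ => hsurplus i),
          integral_finsetSum _ fun i _ => hsurplus i, integral_const, probReal_univ, one_smul]

end ThresholdRule

theorem prophet_inequality_general {Ω : Type*} [MeasurableSpace Ω] (μ : Measure Ω)
    [IsProbabilityMeasure μ] {n : ℕ} (hn : 0 < n) (t : ℝ) (v : Fin n → Ω → ℝ)
    (hmeas : ∀ i, Measurable (v i))
    (hindep : iIndepFun v μ)
    (hint : ∀ i, Integrable (v i) μ)
    (hintmax : Integrable (fun ω => (Finset.univ.sup' (Finset.univ_nonempty_iff.2 ⟨⟨0, hn⟩⟩)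
      fun i => v i ω)) μ)
    (hq : μ {ω | ∀ i, v i ω < t} = 1/2) :
    (1/2) * ∫ ω, (Finset.univ.sup' (Finset.univ_nonempty_iff.2 ⟨⟨0, hn⟩⟩) fun i => v i ω) ∂μ
      ≤ ∫ ω, thresholdPayoff t v ω ∂μ := by
  have hnever : μ.real {ω | ∀ i, v i ω < t} = 1 / 2 := by simp [measureReal_def, hq]
  have hstop : μ.real {ω | ∃ i, t ≤ v i ω} = 1 / 2 := by
    have hcompl : {ω | ∃ i, t ≤ v i ω} = {ω | ∀ i, v i ω < t}ᶜ := by ext; simp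
    rw [hcompl, probReal_compl_eq_one_sub, hnever]
    · norm_num
    · simp only [Set.ofPred_forall]
      exact MeasurableSet.iInter fun i => measurableSet_lt (hmeas i) measurable_const
  calc (1/2) * ∫ ω, (Finset.univ.sup' (Finset.univ_nonempty_iff.2 ⟨⟨0, hn⟩⟩) fun i => v i ω) ∂μ
      ≤ 1 / 2 * (t + ∑ i, ∫ ω, max (v i ω - t) 0 ∂μ) := by
        gcongr
        exact integral_sup'_le_add_sum _ hintmax hint t
    _ = t * (1 / 2) + ∑ i, 1 / 2 * ∫ ω, max (v i ω - t) 0 ∂μ := by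
        rw [mul_add, Finset.mul_sum, mul_comm]
    _ ≤ t * μ.real {ω | ∃ i, t ≤ v i ω} +
          ∑ i, μ.real (notStoppedBefore t v i) * ∫ ω, max (v i ω - t) 0 ∂μ := by
        rw [hstop]
        gcongr with i
        exact hnever ▸ measureReal_mono fun ω hω j _ => hω j
    _ = ∫ ω, thresholdPayoff t v ω ∂μ := (integral_thresholdPayoff hmeas hindep hint).symm

/-- **Prophet inequality** (Samuel-Cahn): if `t` is a threshold such that with probability
exactly `1/2` no prize value reaches `t`, then the `t`-threshold rule obtains expected value
at least half of the expected maximum prize value. -/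
theorem prophet_inequality {Ω : Type*} [MeasurableSpace Ω] (μ : Measure Ω)
    [IsProbabilityMeasure μ] {n : ℕ} (hn : 0 < n) (t : ℝ) (v : Fin n → Ω → ℝ)
    (hmeas : ∀ i, Measurable (v i))
    (hnonneg : ∀ i ω, 0 ≤ v i ω)
    (hindep : iIndepFun v μ)
    (hint : ∀ i, Integrable (v i) μ)
    (hintmax : Integrable (fun ω => (Finset.univ.sup' (Finset.univ_nonempty_iff.2 ⟨⟨0, hn⟩⟩)
      fun i => v i ω)) μ)
    (hintpay : Integrable (thresholdPayoff t v) μ)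
    (hq : μ {ω | ∀ i, v i ω < t} = 1/2) :
    (1/2) * ∫ ω, (Finset.univ.sup' (Finset.univ_nonempty_iff.2 ⟨⟨0, hn⟩⟩) fun i => v i ω) ∂μ
      ≤ ∫ ω, thresholdPayoff t v ω ∂μ :=
  prophet_inequality_general μ hn t v hmeas hindep hint hintmax hq
end

section
/- The expected number of extreme points of the convex hull of n points drawn independently and uniformly at random from the unit square [0,1]^2 is O(log n). -/
open MeasureTheory ProbabilityTheory

/-- The unit square `[0,1]² ⊆ ℝ²`. -/
def unitSquare : Set (ℝ × ℝ) := Set.Icc (0:ℝ) 1 ×ˢ Set.Icc (0:ℝ) 1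

open Classical in
/-- The number of points among `P 0 ω, ..., P (n-1) ω` that are extreme points of the
convex hull of all of them (i.e., vertices of the convex hull). -/
noncomputable def extremeCount {Ω : Type*} (n : ℕ) (P : Fin n → Ω → ℝ × ℝ) (ω : Ω) : ℕ :=
  (Finset.univ.filter fun i : Fin n =>
    P i ω ∉ convexHull ℝ ((Set.range fun j => P j ω) \ {P i ω})).card

/-! A vertex `p` of the convex hull is exposed by a linear functional `f`. Reflecting the square
in each axis along which `f` increases, no other sample point lies strictly below `p` in both
coordinates. Hence the number of vertices is at most the sum, over the four reflections, of the
number of coordinatewise minimal points. The reflections preserve the uniform distribution, and a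
fixed point is minimal among `n` independent uniform points with probability
`∫∫ (1 - x y) ^ (n - 1) dx dy = H_n / n`. So the expected number of vertices is at most
`4 H_n ≤ 4 (1 + log n)`. -/

open Finset

def StrictlyBelow (q p : ℝ × ℝ) : Prop := q.1 < p.1 ∧ q.2 < p.2

theorem not_strictlyBelow_self (p : ℝ × ℝ) : ¬ StrictlyBelow p p :=
  fun h => lt_irrefl _ h.1

def flipIf (b : Bool) (t : ℝ) : ℝ := if b then 1 - t else t

def reflect (s : Bool × Bool) : ℝ × ℝ → ℝ × ℝ := Prod.map (flipIf s.1) (flipIf s.2)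

theorem exists_flipIf_lt_imp_mul_le (a : ℝ) :
    ∃ b : Bool, ∀ t t' : ℝ, flipIf b t' < flipIf b t → a * t ≤ a * t' := by
  rcases le_or_gt 0 a with ha | ha
  · exact ⟨true, fun t t' h => by simp only [flipIf, if_true] at h; nlinarith⟩
  · exact ⟨false, fun t t' h => by simp only [flipIf, Bool.false_eq_true, if_false] at h; nlinarith⟩

theorem exists_reflect_forall_not_strictlyBelow {S : Set (ℝ × ℝ)} (hS : S.Finite) {p : ℝ × ℝ}
    (hp : p ∉ convexHull ℝ (S \ {p})) :
    ∃ s, ∀ q ∈ S, ¬ StrictlyBelow (reflect s q) (reflect s p) := by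
  obtain ⟨f, u, hfu, huf⟩ := geometric_hahn_banach_closed_point (convex_convexHull ℝ _)
    (hS.sdiff.isClosed_convexHull ℝ) hp
  have hf : ∀ q : ℝ × ℝ, f q = f (1, 0) * q.1 + f (0, 1) * q.2 := by
    intro q
    conv_lhs => rw [show q = q.1 • ((1 : ℝ), (0 : ℝ)) + q.2 • ((0 : ℝ), (1 : ℝ)) by ext <;> simp]
    simp only [map_add, map_smul, smul_eq_mul, mul_comm]
  obtain ⟨b₁, hb₁⟩ := exists_flipIf_lt_imp_mul_le (f (1, 0))
  obtain ⟨b₂, hb₂⟩ := exists_flipIf_lt_imp_mul_le (f (0, 1))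
  refine ⟨(b₁, b₂), fun q hq hbelow => ?_⟩
  have hqp : q ≠ p := by
    rintro rfl
    exact not_strictlyBelow_self _ hbelow
  have hle : f p ≤ f q := by
    rw [hf p, hf q]
    exact add_le_add (hb₁ _ _ hbelow.1) (hb₂ _ _ hbelow.2)
  linarith [hfu q (subset_convexHull ℝ _ ⟨hq, hqp⟩)]

open Classical in
noncomputable def minimalCount {n : ℕ} (x : Fin n → ℝ × ℝ) : ℕ :=
  #{i | ∀ j, ¬ StrictlyBelow (x j) (x i)}

theorem extremeCount_le_sum_minimalCount {Ω : Type*} {n : ℕ} (P : Fin n → Ω → ℝ × ℝ) (ω : Ω) :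
    extremeCount n P ω ≤ ∑ s : Bool × Bool, minimalCount fun i => reflect s (P i ω) := by
  classical
  unfold extremeCount minimalCount
  refine (card_le_card fun i hi => ?_).trans card_biUnion_le
  obtain ⟨s, hs⟩ := exists_reflect_forall_not_strictlyBelow (Set.finite_range _)
    (mem_filter.1 hi).2
  exact mem_biUnion.2 ⟨s, mem_univ _, mem_filter.2 ⟨mem_univ _, fun j => hs _ ⟨j, rfl⟩⟩⟩

theorem minimalCount_eq_sum_indicator {Ω : Type*} {n : ℕ} (P : Fin n → Ω → ℝ × ℝ) (ω : Ω) :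
    (minimalCount fun i => P i ω : ℝ) =
      ∑ i, {ω | ∀ j, ¬ StrictlyBelow (P j ω) (P i ω)}.indicator 1 ω := by
  classical
  rw [minimalCount, natCast_card_filter]
  simp [Set.indicator_apply]

theorem measurableSet_strictlyBelow :
    MeasurableSet {z : (ℝ × ℝ) × (ℝ × ℝ) | StrictlyBelow z.1 z.2} :=
  (measurableSet_lt (f := fun z : (ℝ × ℝ) × (ℝ × ℝ) => z.1.1) (by fun_prop) (by fun_prop)).inter
    (measurableSet_lt (f := fun z : (ℝ × ℝ) × (ℝ × ℝ) => z.1.2) (by fun_prop) (by fun_prop))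

theorem measurableSet_forall_not_strictlyBelow {m : ℕ} (i : Fin m) :
    MeasurableSet {x : Fin m → ℝ × ℝ | ∀ j, ¬ StrictlyBelow (x j) (x i)} := by
  simp only [Set.ofPred_forall]
  exact .iInter fun j => MeasurableSet.preimage (f := fun x : Fin m → ℝ × ℝ => (x j, x i))
    measurableSet_strictlyBelow.compl (by fun_prop)

theorem measure_pi_forall_notMem {α : Type*} [MeasurableSpace α] (ν : Measure α)
    [SigmaFinite ν] {K : Set (α × α)} (hK : MeasurableSet K) (hirrefl : ∀ a, (a, a) ∉ K) {m : ℕ}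
    (i : Fin (m + 1)) :
    Measure.pi (fun _ => ν) {x | ∀ j, (x j, x i) ∉ K} = ∫⁻ p, ν {q | (q, p) ∉ K} ^ m ∂ν := by
  set D : Set (α × (Fin m → α)) := {z | ∀ j, (z.2 j, z.1) ∉ K}
  have hD : MeasurableSet D := by
    simp only [D, Set.ofPred_forall]
    exact .iInter fun j => hK.compl.preimage (by fun_prop)
  have hpre : {x : Fin (m + 1) → α | ∀ j, (x j, x i) ∉ K} =
      MeasurableEquiv.piFinSuccAbove (fun _ => α) i ⁻¹' D := by
    ext x
    simp [D, Fin.forall_iff_succAbove i, Fin.removeNth, hirrefl]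
  rw [hpre, (measurePreserving_piFinSuccAbove (fun _ => ν) i).measure_preimage
    hD.nullMeasurableSet, Measure.prod_apply hD]
  congr 1 with p
  have hslice : Prod.mk p ⁻¹' D = Set.univ.pi fun _ => {q | (q, p) ∉ K} := by
    ext y; simp [D]
  simp [hslice, Measure.pi_pi]

theorem measurableSet_unitSquare : MeasurableSet unitSquare :=
  measurableSet_Icc.prod measurableSet_Icc

theorem integrableOn_unitSquare {f : ℝ × ℝ → ℝ} (hf : Continuous f) :
    IntegrableOn f unitSquare :=
  hf.continuousOn.integrableOn_compact (isCompact_Icc.prod isCompact_Icc)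

theorem volume_restrict_unitSquare :
    volume.restrict unitSquare =
      (volume.restrict (Set.Icc (0:ℝ) 1)).prod (volume.restrict (Set.Icc (0:ℝ) 1)) := by
  rw [Measure.prod_restrict, ← Measure.volume_eq_prod, unitSquare]

instance : IsProbabilityMeasure (volume.restrict (Set.Icc (0:ℝ) 1)) :=
  ⟨by simp⟩

instance : IsProbabilityMeasure (volume.restrict unitSquare) := by
  rw [volume_restrict_unitSquare]
  infer_instance

theorem measurePreserving_flipIf (b : Bool) :
    MeasurePreserving (flipIf b) (volume.restrict (Set.Icc (0:ℝ) 1))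
      (volume.restrict (Set.Icc (0:ℝ) 1)) := by
  cases b
  · exact MeasurePreserving.id _
  · show MeasurePreserving (fun t : ℝ => 1 - t) _ _
    simpa using (Measure.measurePreserving_sub_left volume (1:ℝ)).restrict_preimage
      (measurableSet_Icc (a := 0) (b := 1))

theorem measurePreserving_reflect (s : Bool × Bool) :
    MeasurePreserving (reflect s) (volume.restrict unitSquare) (volume.restrict unitSquare) := by
  rw [volume_restrict_unitSquare]
  exact (measurePreserving_flipIf s.1).prod (measurePreserving_flipIf s.2)

theorem volume_restrict_Icc_Iio {a : ℝ} (ha : a ≤ 1) :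
    volume.restrict (Set.Icc (0:ℝ) 1) (Set.Iio a) = ENNReal.ofReal a := by
  rw [Measure.restrict_apply measurableSet_Iio,
    show Set.Iio a ∩ Set.Icc 0 1 = Set.Ico 0 a by ext; simp; grind]
  simp

theorem volume_restrict_unitSquare_not_strictlyBelow {p : ℝ × ℝ} (hp : p ∈ unitSquare) :
    volume.restrict unitSquare {q | ¬ StrictlyBelow q p} = ENNReal.ofReal (1 - p.1 * p.2) := by
  have hbelow : {q | StrictlyBelow q p} = Set.Iio p.1 ×ˢ Set.Iio p.2 := rfl
  rw [← Set.compl_ofPred, hbelow, prob_compl_eq_one_sub (measurableSet_Iio.prod measurableSet_Iio),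
    volume_restrict_unitSquare,
    Measure.prod_prod, volume_restrict_Icc_Iio hp.1.2, volume_restrict_Icc_Iio hp.2.2,
    ← ENNReal.ofReal_mul hp.1.1, ← ENNReal.ofReal_one, ENNReal.ofReal_sub _ (by
      have := hp.1.1; have := hp.2.1; positivity)]

theorem integral_one_sub_mul_pow (m : ℕ) (x : ℝ) :
    ∫ y in (0:ℝ)..1, (1 - x * y) ^ m = (∑ j ∈ range (m + 1), (1 - x) ^ j) / (m + 1) := by
  rcases eq_or_ne x 0 with rfl | hx
  · simp [field]
  have hsubst : x * ∫ y in (0:ℝ)..1, (1 - x * y) ^ m = (1 - (1 - x) ^ (m + 1)) / (m + 1) := by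
    simpa [intervalIntegral.integral_comp_sub_left (fun u : ℝ => u ^ m), integral_pow] using
      intervalIntegral.smul_integral_comp_mul_left (fun u : ℝ => (1 - u) ^ m) x (a := 0) (b := 1)
  apply mul_left_cancel₀ hx
  rw [hsubst, mul_div_assoc']
  congr 1
  linear_combination geom_sum_mul (1 - x) (m + 1)

theorem integral_unitSquare_one_sub_mul_pow (m : ℕ) :
    ∫ p in unitSquare, (1 - p.1 * p.2) ^ m = harmonic (m + 1) / (m + 1) := by
  have hint : IntegrableOn (fun p : ℝ × ℝ => (1 - p.1 * p.2) ^ m) unitSquare :=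
    integrableOn_unitSquare (by fun_prop)
  rw [IntegrableOn, volume_restrict_unitSquare] at hint
  rw [volume_restrict_unitSquare]
  simp only [integral_prod _ hint, integral_Icc_eq_integral_Ioc,
    ← intervalIntegral.integral_of_le zero_le_one, integral_one_sub_mul_pow]
  rw [intervalIntegral.integral_div, intervalIntegral.integral_finsetSum fun j _ =>
    (by fun_prop : Continuous fun x : ℝ => (1 - x) ^ j).intervalIntegrable 0 1]
  simp only [harmonic, Rat.cast_sum, Rat.cast_inv, Rat.cast_natCast]
  congr 1
  refine sum_congr rfl fun j _ => ?_
  simp [intervalIntegral.integral_comp_sub_left fun u : ℝ => u ^ j]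

section UniformSample

variable {Ω : Type*} [MeasurableSpace Ω] {μ : Measure Ω} {n : ℕ} {P : Fin n → Ω → ℝ × ℝ}

theorem measure_forall_not_strictlyBelow {m : ℕ} {P : Fin (m + 1) → Ω → ℝ × ℝ}
    (hP : ∀ i, Measurable (P i)) (hindep : iIndepFun P μ)
    (hunif : ∀ i, μ.map (P i) = volume.restrict unitSquare) (i : Fin (m + 1)) :
    μ {ω | ∀ j, ¬ StrictlyBelow (P j ω) (P i ω)} =
      ENNReal.ofReal (harmonic (m + 1) / (m + 1)) := by
  have hsample : μ.map (fun ω j => P j ω) = Measure.pi fun _ => volume.restrict unitSquare := by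
    simp only [hindep.map_fun_eq_pi_map fun i => (hP i).aemeasurable, hunif]
  have hint : IntegrableOn (fun p : ℝ × ℝ => (1 - p.1 * p.2) ^ m) unitSquare :=
    integrableOn_unitSquare (by fun_prop)
  have hnonneg : ∀ p ∈ unitSquare, 0 ≤ 1 - p.1 * p.2 := fun p hp =>
    sub_nonneg.2 (mul_le_one₀ hp.1.2 hp.2.1 hp.2.2)
  calc μ {ω | ∀ j, ¬ StrictlyBelow (P j ω) (P i ω)}
      = Measure.pi (fun _ => volume.restrict unitSquare)
          {x | ∀ j, ¬ StrictlyBelow (x j) (x i)} := by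
        rw [← hsample, Measure.map_apply (measurable_pi_lambda _ hP)
          (measurableSet_forall_not_strictlyBelow i)]
        rfl
    _ = ∫⁻ p in unitSquare, ENNReal.ofReal ((1 - p.1 * p.2) ^ m) := by
        refine (measure_pi_forall_notMem _ measurableSet_strictlyBelow not_strictlyBelow_self
          i).trans (setLIntegral_congr_fun measurableSet_unitSquare fun p hp => ?_)
        rw [ENNReal.ofReal_pow (hnonneg p hp)]
        exact congrArg (· ^ m) (volume_restrict_unitSquare_not_strictlyBelow hp)
    _ = ENNReal.ofReal (harmonic (m + 1) / (m + 1)) := by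
        rw [← ofReal_integral_eq_lintegral_ofReal hint, integral_unitSquare_one_sub_mul_pow]
        filter_upwards [ae_restrict_mem measurableSet_unitSquare] with p hp
        exact pow_nonneg (hnonneg p hp) m

theorem integrable_minimalCount [IsFiniteMeasure μ] (hP : ∀ i, Measurable (P i)) :
    Integrable (fun ω => (minimalCount fun i => P i ω : ℝ)) μ := by
  simp only [minimalCount_eq_sum_indicator P]
  exact integrable_finsetSum _ fun i _ => (integrable_const 1).indicator
    ((measurableSet_forall_not_strictlyBelow i).preimage (measurable_pi_lambda _ hP))

theorem integral_minimalCount (hP : ∀ i, Measurable (P i)) (hindep : iIndepFun P μ)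
    (hunif : ∀ i, μ.map (P i) = volume.restrict unitSquare) :
    ∫ ω, (minimalCount fun i => P i ω : ℝ) ∂μ = harmonic n := by
  have := hindep.isProbabilityMeasure
  rcases n with _ | m
  · simp [minimalCount]
  have hA : ∀ i, MeasurableSet {ω | ∀ j, ¬ StrictlyBelow (P j ω) (P i ω)} := fun i =>
    (measurableSet_forall_not_strictlyBelow i).preimage (measurable_pi_lambda _ hP)
  simp only [minimalCount_eq_sum_indicator P]
  rw [integral_finsetSum _ fun i _ => (integrable_const 1).indicator (hA i)]
  simp only [integral_indicator_one (hA _), measureReal_def,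
    measure_forall_not_strictlyBelow hP hindep hunif]
  have hH : (0 : ℝ) ≤ harmonic (m + 1) := by exact_mod_cast (harmonic_pos m.succ_ne_zero).le
  rw [sum_const, card_univ, Fintype.card_fin, nsmul_eq_mul, ENNReal.toReal_ofReal (by positivity)]
  push_cast
  field_simp

theorem integral_extremeCount_le (hP : ∀ i, Measurable (P i)) (hindep : iIndepFun P μ)
    (hunif : ∀ i, μ.map (P i) = volume.restrict unitSquare) :
    ∫ ω, (extremeCount n P ω : ℝ) ∂μ ≤ 4 * harmonic n := by
  have := hindep.isProbabilityMeasure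
  have hreflect : ∀ s, ∫ ω, (minimalCount fun i => reflect s (P i ω) : ℝ) ∂μ = harmonic n :=
    fun s => integral_minimalCount (fun i => (measurePreserving_reflect s).measurable.comp (hP i))
      (hindep.comp (fun _ => reflect s) fun _ => (measurePreserving_reflect s).measurable)
      fun i => ((measurePreserving_reflect s).comp ⟨hP i, hunif i⟩).map_eq
  have hintegrable : ∀ s, Integrable (fun ω => (minimalCount fun i => reflect s (P i ω) : ℝ)) μ :=
    fun s => integrable_minimalCount fun i => (measurePreserving_reflect s).measurable.comp (hP i)
  -- `integral_mono_of_nonneg` needs no measurability of the vertex count itself.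
  calc ∫ ω, (extremeCount n P ω : ℝ) ∂μ
      ≤ ∫ ω, ∑ s : Bool × Bool, (minimalCount fun i => reflect s (P i ω) : ℝ) ∂μ :=
        integral_mono_of_nonneg (ae_of_all _ fun ω => by positivity)
          (integrable_finsetSum _ fun s _ => hintegrable s)
          (ae_of_all _ fun ω => by
            simpa using (Nat.cast_le (α := ℝ)).2 (extremeCount_le_sum_minimalCount P ω))
    _ = 4 * harmonic n := by
        rw [integral_finsetSum _ fun s _ => hintegrable s]
        simp [hreflect]

end UniformSample

/-- The expected number of extreme points of the convex hull of `n` points drawn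
independently and uniformly at random from the unit square is `O(log n)`. -/
theorem expected_hull_vertices_log :
    ∃ C : ℝ, 0 < C ∧ ∀ (n : ℕ), 2 ≤ n →
      ∀ (Ω : Type) (_ : MeasurableSpace Ω) (μ : Measure Ω), IsProbabilityMeasure μ →
      ∀ P : Fin n → Ω → ℝ × ℝ, (∀ i, Measurable (P i)) →
      iIndepFun P μ →
      (∀ i, Measure.map (P i) μ = volume.restrict unitSquare) →
      ∫ ω, (extremeCount n P ω : ℝ) ∂μ ≤ C * Real.log n := by
  refine ⟨10, by norm_num, fun n hn Ω _ μ _ P hP hindep hunif => ?_⟩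
  have hlog : 2 / 3 ≤ Real.log n := by
    calc (2 / 3 : ℝ) ≤ Real.log 2 := by linarith [Real.log_two_gt_d9]
      _ ≤ Real.log n := Real.log_le_log (by norm_num) (by exact_mod_cast hn)
  calc ∫ ω, (extremeCount n P ω : ℝ) ∂μ ≤ 4 * harmonic n := integral_extremeCount_le hP hindep hunif
    _ ≤ 4 * (1 + Real.log n) := by gcongr; exact harmonic_le_one_add_log n
    _ ≤ 10 * Real.log n := by linarith
end

section
/- There is a constant c_1 > 0 such that, with probability 1−o(1) as n → ∞, every tour through n points drawn independently and uniformly at random from the unit square has total Euclidean length at least c_1·√n. -/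
open MeasureTheory ProbabilityTheory

/-- The length of the closed tour visiting the points `x 0, ..., x (n-1)` in the order
given by the permutation `σ` (returning to its start). -/
noncomputable def tourLength {n : ℕ} (x : Fin n → ℝ × ℝ) (σ : Equiv.Perm (Fin n)) : ℝ :=
  ∑ i : Fin n, dist (x (σ i)) (x (σ (finRotate n i)))

/-!
Call two points close if their distance is at most `r = 1 / (8 √n)`. A point close to no other
point is left along an edge longer than `r`, so every tour has length at least `r (n - X)`, where
`X` counts the ordered close pairs. A close pair has probability at most `4 r²`, so
`E X ≤ n / 16`; close-pair events of disjoint index pairs are independent, and two that share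
one index occur together with probability at most `(4 r²)²`, so `Var X ≤ 9 n / 64`. Chebyshev's
inequality gives `X < 7 n / 16`, hence length at least `r · 9 n / 16 ≥ √n / 16`, outside an
event of probability at most `1 / n`.
-/

open Finset Metric Fintype
open scoped ENNReal

section ClosePairs

variable {ι Ω E : Type*} [Fintype ι] [PseudoMetricSpace E]

noncomputable def closePairs (x : ι → E) (r : ℝ) : Finset (ι × ι) :=
  {p ∈ univ.offDiag | dist (x p.1) (x p.2) ≤ r}

lemma card_closePairs_eq_sum_indicator (P : ι → Ω → E) (r : ℝ) (ω : Ω) :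
    (#(closePairs (fun i => P i ω) r) : ℝ)
      = ∑ p ∈ univ.offDiag, {ω' | dist (P p.1 ω') (P p.2 ω') ≤ r}.indicator 1 ω := by
  rw [closePairs, card_filter]
  push_cast
  simp only [Set.indicator_apply, Set.mem_ofPred_eq, Pi.one_apply]

lemma card_offDiag_univ_le : (#(univ.offDiag : Finset (ι × ι)) : ℝ) ≤ card ι ^ 2 := by
  rw [offDiag_card, card_univ]
  exact_mod_cast (Nat.sub_le _ _).trans (sq _).ge

variable [DecidableEq ι]

noncomputable def isolatedPoints (x : ι → E) (r : ℝ) : Finset ι :=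
  {i | ∀ j ≠ i, r < dist (x i) (x j)}

lemma mem_isolatedPoints {x : ι → E} {r : ℝ} {i : ι} :
    i ∈ isolatedPoints x r ↔ ∀ j ≠ i, r < dist (x i) (x j) := by
  simp [isolatedPoints]

lemma card_le_card_closePairs_add_card_isolatedPoints (x : ι → E) (r : ℝ) :
    card ι ≤ #(closePairs x r) + #(isolatedPoints x r) := by
  have hsub : univ \ isolatedPoints x r ⊆ (closePairs x r).image Prod.fst := by
    intro i hi
    obtain ⟨j, hji, hij⟩ : ∃ j, j ≠ i ∧ dist (x i) (x j) ≤ r := by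
      simpa [mem_isolatedPoints] using hi
    exact mem_image.mpr ⟨(i, j), by simp [closePairs, hji.symm, hij], rfl⟩
  calc card ι = #(univ \ isolatedPoints x r) + #(isolatedPoints x r) := by
        rw [card_sdiff_add_card_eq_card (subset_univ _), card_univ]
    _ ≤ #(closePairs x r) + #(isolatedPoints x r) := by
        gcongr; exact (card_le_card hsub).trans card_image_le

end ClosePairs

lemma mul_card_isolatedPoints_le_tourLength {n : ℕ} (hn : 2 ≤ n) (x : Fin n → ℝ × ℝ)
    (σ : Equiv.Perm (Fin n)) (r : ℝ) : r * #(isolatedPoints x r) ≤ tourLength x σ := by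
  have hsucc : ∀ k, σ (finRotate n (σ.symm k)) ≠ k := fun k h =>
    Equiv.Perm.mem_support.mp (by simp [support_finRotate_of_le hn])
      (σ.injective (h.trans (σ.apply_symm_apply k).symm))
  have hlen : tourLength x σ = ∑ k, dist (x k) (x (σ (finRotate n (σ.symm k)))) := by
    rw [tourLength, ← Equiv.sum_comp σ fun k => dist (x k) (x (σ (finRotate n (σ.symm k))))]
    simp only [Equiv.symm_apply_apply]
  calc r * #(isolatedPoints x r) = ∑ k ∈ isolatedPoints x r, r := by
        rw [sum_const, nsmul_eq_mul, mul_comm]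
    _ ≤ ∑ k ∈ isolatedPoints x r, dist (x k) (x (σ (finRotate n (σ.symm k)))) :=
        sum_le_sum fun k hk => (mem_isolatedPoints.mp hk _ (hsucc k)).le
    _ ≤ tourLength x σ := hlen ▸ sum_le_sum_of_subset_of_nonneg (subset_univ _)
        fun _ _ _ => dist_nonneg

lemma mul_sub_card_closePairs_le_tourLength {n : ℕ} (hn : 2 ≤ n) (x : Fin n → ℝ × ℝ)
    (σ : Equiv.Perm (Fin n)) {r : ℝ} (hr : 0 ≤ r) :
    r * (n - #(closePairs x r)) ≤ tourLength x σ := by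
  have h : (n : ℝ) ≤ #(closePairs x r) + #(isolatedPoints x r) := by
    exact_mod_cast Fintype.card_fin n ▸ card_le_card_closePairs_add_card_isolatedPoints x r
  exact (mul_le_mul_of_nonneg_left (by linarith) hr).trans
    (mul_card_isolatedPoints_le_tourLength hn x σ r)

section Independence

variable {Ω α β : Type*} [MeasurableSpace Ω] {μ : Measure Ω} [IsProbabilityMeasure μ]
  [MeasurableSpace α] [MeasurableSpace β]

lemma measure_prodMk_mem_le_of_indepFun {X : Ω → α} {Y : Ω → β} (hX : Measurable X)
    (hY : Measurable Y) (hXY : IndepFun X Y μ) {S : Set (α × β)} (hS : MeasurableSet S)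
    {C : ℝ≥0∞} (hC : ∀ x, μ.map Y (Prod.mk x ⁻¹' S) ≤ C) :
    μ {ω | (X ω, Y ω) ∈ S} ≤ C := by
  have := Measure.isProbabilityMeasure_map (μ := μ) hX.aemeasurable
  calc μ {ω | (X ω, Y ω) ∈ S} = (μ.map X).prod (μ.map Y) S := by
        rw [← (indepFun_iff_map_prod_eq_prod_map_map hX.aemeasurable hY.aemeasurable).mp hXY,
          Measure.map_apply (hX.prodMk hY) hS]; rfl
    _ ≤ ∫⁻ _, C ∂(μ.map X) := (Measure.prod_apply hS).trans_le (lintegral_mono hC)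
    _ = C := by simp

variable {E : Type*} [PseudoMetricSpace E] [MeasurableSpace E] [OpensMeasurableSpace E]
  [SecondCountableTopology E] {X Y Z : Ω → E} {r : ℝ} {C : ℝ≥0∞}

lemma measure_dist_le_le_of_indepFun (hX : Measurable X) (hY : Measurable Y)
    (hXY : IndepFun X Y μ) (hball : ∀ x, μ.map Y (closedBall x r) ≤ C) :
    μ {ω | dist (X ω) (Y ω) ≤ r} ≤ C :=
  measure_prodMk_mem_le_of_indepFun hX hY hXY (S := {z | dist z.1 z.2 ≤ r})
    (measurableSet_le measurable_dist measurable_const) fun x => by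
      simpa [closedBall, dist_comm] using hball x

lemma measure_dist_le_inter_dist_le_le_of_indepFun (hX : Measurable X) (hY : Measurable Y)
    (hZ : Measurable Z) (hXYZ : IndepFun X (fun ω => (Y ω, Z ω)) μ) (hYZ : IndepFun Y Z μ)
    (hballY : ∀ x, μ.map Y (closedBall x r) ≤ C) (hballZ : ∀ x, μ.map Z (closedBall x r) ≤ C) :
    μ ({ω | dist (X ω) (Y ω) ≤ r} ∩ {ω | dist (X ω) (Z ω) ≤ r}) ≤ C * C := by
  have hS : MeasurableSet {z : E × E × E | dist z.1 z.2.1 ≤ r ∧ dist z.1 z.2.2 ≤ r} :=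
    (measurableSet_le (measurable_fst.dist measurable_snd.fst) measurable_const).inter
      (measurableSet_le (measurable_fst.dist measurable_snd.snd) measurable_const)
  refine measure_prodMk_mem_le_of_indepFun hX (hY.prodMk hZ) hXYZ hS fun x => ?_
  have hsection : Prod.mk x ⁻¹' {z : E × E × E | dist z.1 z.2.1 ≤ r ∧ dist z.1 z.2.2 ≤ r}
      = closedBall x r ×ˢ closedBall x r := by
    ext; simp [dist_comm]
  rw [(indepFun_iff_map_prod_eq_prod_map_map hY.aemeasurable hZ.aemeasurable).mp hYZ, hsection,
    Measure.prod_prod]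
  exact mul_le_mul' (hballY x) (hballZ x)

end Independence

section Covariance

variable {Ω ι : Type*} [MeasurableSpace Ω] {μ : Measure Ω}

lemma meas_add_le_le_variance_div_sq [IsFiniteMeasure μ] {X : Ω → ℝ} (hX : MemLp X 2 μ)
    {a t : ℝ} (hEX : μ[X] ≤ a) (ht : 0 < t) :
    μ {ω | a + t ≤ X ω} ≤ ENNReal.ofReal (Var[X; μ] / t ^ 2) :=
  (measure_mono fun ω (hω : a + t ≤ X ω) =>
    show t ≤ |X ω - μ[X]| by linarith [le_abs_self (X ω - μ[X])]).trans
    (meas_ge_le_variance_div_sq hX ht)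

variable [IsProbabilityMeasure μ]

lemma covariance_indicator_one {A B : Set Ω} (hA : MeasurableSet A) (hB : MeasurableSet B) :
    cov[A.indicator 1, B.indicator 1; μ] = μ.real (A ∩ B) - μ.real A * μ.real B := by
  rw [covariance_eq_sub (X := A.indicator 1) (Y := B.indicator 1)
      (memLp_indicator_const 2 hA 1 (by simp)) (memLp_indicator_const 2 hB 1 (by simp)),
    ← Set.inter_indicator_one, integral_indicator_one hA, integral_indicator_one hB,
    integral_indicator_one (hA.inter hB)]

lemma variance_sum_indicator_le (s : Finset ι) {A : ι → Set Ω} (hA : ∀ i, MeasurableSet (A i))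
    (D : ι → ι → Prop) [DecidableRel D]
    (hindep : ∀ i ∈ s, ∀ j ∈ s, ¬ D i j → μ (A i ∩ A j) = μ (A i) * μ (A j)) :
    Var[fun ω => ∑ i ∈ s, (A i).indicator 1 ω; μ]
      ≤ ∑ i ∈ s, ∑ j ∈ s with D i j, μ.real (A i ∩ A j) := by
  rw [variance_fun_sum' (X := fun i => (A i).indicator 1)
    fun i _ => memLp_indicator_const 2 (hA i) 1 (by simp)]
  refine sum_le_sum fun i hi => ?_
  rw [sum_filter]
  refine sum_le_sum fun j hj => ?_
  rw [covariance_indicator_one (hA i) (hA j)]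
  split_ifs with hD
  · exact sub_le_self _ (by positivity)
  · rw [measureReal_def, hindep i hi j hj hD, ENNReal.toReal_mul, ← measureReal_def,
      ← measureReal_def, sub_self]

end Covariance

section SharesIndex

variable {ι : Type*}

def SharesIndex (p q : ι × ι) : Prop := q.1 = p.1 ∨ q.1 = p.2 ∨ q.2 = p.1 ∨ q.2 = p.2

variable [DecidableEq ι]

instance : DecidableRel (SharesIndex (ι := ι)) :=
  fun _ _ => inferInstanceAs (Decidable (_ ∨ _ ∨ _ ∨ _))

lemma card_filter_sharesIndex_le [Fintype ι] (p : ι × ι) :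
    #{q | SharesIndex p q} ≤ 4 * card ι := by
  have hsub : ({q | SharesIndex p q} : Finset (ι × ι))
      ⊆ ({p.1, p.2} ×ˢ univ) ∪ (univ ×ˢ {p.1, p.2}) := by
    intro q hq
    have hq : SharesIndex p q := by simpa using hq
    rcases hq with h | h | h | h <;> simp [h]
  calc #{q | SharesIndex p q} ≤ #({p.1, p.2} ×ˢ univ) + #(univ ×ˢ ({p.1, p.2} : Finset ι)) :=
        (card_le_card hsub).trans (card_union_le _ _)
    _ ≤ 2 * card ι + card ι * 2 := by
        simp only [card_product, card_univ]
        gcongr <;> exact card_le_two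
    _ = 4 * card ι := by ring

end SharesIndex

section Moments

variable {ι Ω E : Type*} [PseudoMetricSpace E] {P : ι → Ω → E} {r c : ℝ}

lemma setOf_dist_le_comm (P : ι → Ω → E) (r : ℝ) (i j : ι) :
    {ω | dist (P i ω) (P j ω) ≤ r} = {ω | dist (P j ω) (P i ω) ≤ r} := by
  simp_rw [dist_comm]

variable [MeasurableSpace Ω] {μ : Measure Ω} [IsProbabilityMeasure μ] [MeasurableSpace E]
  [OpensMeasurableSpace E] [SecondCountableTopology E]

lemma measureReal_dist_le_le (hm : ∀ i, Measurable (P i)) (hind : iIndepFun P μ) (hc : 0 ≤ c)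
    (hball : ∀ i x, μ.map (P i) (closedBall x r) ≤ ENNReal.ofReal c) {i j : ι} (hij : i ≠ j) :
    μ.real {ω | dist (P i ω) (P j ω) ≤ r} ≤ c :=
  ENNReal.toReal_le_of_le_ofReal hc
    (measure_dist_le_le_of_indepFun (hm i) (hm j) (hind.indepFun hij) (hball j))

lemma measure_inter_dist_le_le_of_sharesIndex (hm : ∀ i, Measurable (P i))
    (hind : iIndepFun P μ) {C : ℝ≥0∞} (hball : ∀ i x, μ.map (P i) (closedBall x r) ≤ C)
    {p q : ι × ι} (hp : p.1 ≠ p.2) (hq : q.1 ≠ q.2) (hpq : SharesIndex p q) (hqp : q ≠ p)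
    (hqp' : q ≠ p.swap) :
    μ ({ω | dist (P p.1 ω) (P p.2 ω) ≤ r} ∩ {ω | dist (P q.1 ω) (P q.2 ω) ≤ r}) ≤ C * C := by
  have key : ∀ {a b d : ι}, b ≠ a → d ≠ a → b ≠ d →
      μ ({ω | dist (P a ω) (P b ω) ≤ r} ∩ {ω | dist (P a ω) (P d ω) ≤ r}) ≤ C * C :=
    fun hba hda hbd => measure_dist_le_inter_dist_le_le_of_indepFun (hm _) (hm _) (hm _)
      (hind.indepFun_prodMk hm _ _ _ hba hda).symm (hind.indepFun hbd) (hball _) (hball _)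
  -- Up to orientation, `p = (a, b)` and `q = (a, d)` with `a, b, d` distinct.
  obtain ⟨a, b⟩ := p
  obtain ⟨d, e⟩ := q
  simp only [SharesIndex, ne_eq, Prod.mk.injEq, Prod.swap_prod_mk] at *
  rcases hpq with rfl | rfl | rfl | rfl
  · exact key (Ne.symm hp) (Ne.symm hq) fun h => hqp ⟨rfl, h.symm⟩
  · rw [setOf_dist_le_comm P r a]
    exact key hp (Ne.symm hq) fun h => hqp' ⟨rfl, h.symm⟩
  · rw [setOf_dist_le_comm P r d]
    exact key (Ne.symm hp) hq fun h => hqp' ⟨h.symm, rfl⟩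
  · rw [setOf_dist_le_comm P r a, setOf_dist_le_comm P r d]
    exact key hp hq fun h => hqp ⟨h.symm, rfl⟩

variable [Fintype ι]

lemma memLp_card_closePairs (hm : ∀ i, Measurable (P i)) :
    MemLp (fun ω => (#(closePairs (fun i => P i ω) r) : ℝ)) 2 μ := by
  simp_rw [card_closePairs_eq_sum_indicator]
  exact memLp_finsetSum _ fun p _ => memLp_indicator_const 2
    (measurableSet_le ((hm p.1).dist (hm p.2)) measurable_const) 1 (by simp)

lemma integral_card_closePairs_le (hm : ∀ i, Measurable (P i)) (hind : iIndepFun P μ)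
    (hc : 0 ≤ c) (hball : ∀ i x, μ.map (P i) (closedBall x r) ≤ ENNReal.ofReal c) :
    μ[fun ω => (#(closePairs (fun i => P i ω) r) : ℝ)] ≤ card ι ^ 2 * c := by
  have hA : ∀ p : ι × ι, MeasurableSet {ω | dist (P p.1 ω) (P p.2 ω) ≤ r} :=
    fun p => measurableSet_le ((hm p.1).dist (hm p.2)) measurable_const
  simp_rw [card_closePairs_eq_sum_indicator]
  rw [integral_finsetSum _ fun p _ => (integrable_const 1).indicator (hA p)]
  simp_rw [integral_indicator_one (hA _)]
  calc ∑ p ∈ univ.offDiag, μ.real {ω | dist (P p.1 ω) (P p.2 ω) ≤ r}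
      ≤ #(univ.offDiag : Finset (ι × ι)) • c :=
        sum_le_card_nsmul _ _ _ fun p hp =>
          measureReal_dist_le_le hm hind hc hball (mem_offDiag.mp hp).2.2
    _ ≤ card ι ^ 2 * c := by
        rw [nsmul_eq_mul]; exact mul_le_mul_of_nonneg_right card_offDiag_univ_le hc

lemma sum_measureReal_inter_dist_le_le [DecidableEq ι] (hm : ∀ i, Measurable (P i))
    (hind : iIndepFun P μ) (hc : 0 ≤ c)
    (hball : ∀ i x, μ.map (P i) (closedBall x r) ≤ ENNReal.ofReal c) {p : ι × ι}
    (hp : p ∈ univ.offDiag) :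
    ∑ q ∈ univ.offDiag with SharesIndex p q,
        μ.real ({ω | dist (P p.1 ω) (P p.2 ω) ≤ r} ∩ {ω | dist (P q.1 ω) (P q.2 ω) ≤ r})
      ≤ 2 * c + 4 * card ι * c ^ 2 := by
  have hp' : p.1 ≠ p.2 := (mem_offDiag.mp hp).2.2
  rw [← sum_filter_add_sum_filter_not _ fun q => q = p ∨ q = p.swap]
  refine add_le_add ((sum_le_card_nsmul _ _ c fun q _ => (measureReal_mono
    Set.inter_subset_left).trans (measureReal_dist_le_le hm hind hc hball hp')).trans ?_)
    ((sum_le_card_nsmul _ _ (c ^ 2) fun q hq => ?_).trans ?_)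
  · rw [nsmul_eq_mul]
    refine mul_le_mul_of_nonneg_right ?_ hc
    exact_mod_cast (card_le_card (t := {p, p.swap}) fun q hq => by
      rcases (mem_filter.mp hq).2 with rfl | rfl <;> simp).trans card_le_two
  · simp only [mem_filter, mem_offDiag, mem_univ, true_and, not_or] at hq
    obtain ⟨⟨hq, hpq⟩, hqp, hqp'⟩ := hq
    refine ENNReal.toReal_le_of_le_ofReal (sq_nonneg c) ?_
    rw [sq, ENNReal.ofReal_mul hc]
    exact measure_inter_dist_le_le_of_sharesIndex hm hind hball hp' hq hpq hqp hqp'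
  · rw [nsmul_eq_mul]
    refine mul_le_mul_of_nonneg_right ?_ (sq_nonneg c)
    exact_mod_cast (card_le_card fun q hq => by simp_all).trans (card_filter_sharesIndex_le p)

lemma variance_card_closePairs_le (hm : ∀ i, Measurable (P i)) (hind : iIndepFun P μ)
    (hc : 0 ≤ c) (hball : ∀ i x, μ.map (P i) (closedBall x r) ≤ ENNReal.ofReal c) :
    Var[fun ω => (#(closePairs (fun i => P i ω) r) : ℝ); μ]
      ≤ card ι ^ 2 * (2 * c + 4 * card ι * c ^ 2) := by
  classical
  have hS : MeasurableSet {z : E × E | dist z.1 z.2 ≤ r} :=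
    measurableSet_le measurable_dist measurable_const
  simp_rw [card_closePairs_eq_sum_indicator]
  refine (variance_sum_indicator_le _ (A := fun p : ι × ι => {ω | dist (P p.1 ω) (P p.2 ω) ≤ r})
    (fun p => measurableSet_le ((hm p.1).dist (hm p.2))
    measurable_const) SharesIndex fun p _ q _ hpq => ?_).trans ?_
  · simp only [SharesIndex, not_or] at hpq
    obtain ⟨h1, h2, h3, h4⟩ := hpq
    exact (hind.indepFun_prodMk_prodMk hm p.1 p.2 q.1 q.2 (Ne.symm h1) (Ne.symm h3)
      (Ne.symm h2) (Ne.symm h4)).measure_inter_preimage_eq_mul _ _ hS hS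
  calc _ ≤ #(univ.offDiag : Finset (ι × ι)) • (2 * c + 4 * card ι * c ^ 2) :=
        sum_le_card_nsmul _ _ _ fun p hp => sum_measureReal_inter_dist_le_le hm hind hc hball hp
    _ ≤ card ι ^ 2 * (2 * c + 4 * card ι * c ^ 2) := by
        rw [nsmul_eq_mul]; exact mul_le_mul_of_nonneg_right card_offDiag_univ_le (by positivity)

lemma measure_le_card_closePairs_le (hm : ∀ i, Measurable (P i)) (hind : iIndepFun P μ)
    (hc : 0 ≤ c) (hball : ∀ i x, μ.map (P i) (closedBall x r) ≤ ENNReal.ofReal c) {t : ℝ}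
    (ht : 0 < t) :
    μ {ω | card ι ^ 2 * c + t ≤ #(closePairs (fun i => P i ω) r)}
      ≤ ENNReal.ofReal (card ι ^ 2 * (2 * c + 4 * card ι * c ^ 2) / t ^ 2) :=
  (meas_add_le_le_variance_div_sq (memLp_card_closePairs hm)
    (integral_card_closePairs_le hm hind hc hball) ht).trans
    (ENNReal.ofReal_le_ofReal (by gcongr; exact variance_card_closePairs_le hm hind hc hball))

end Moments

lemma Real.volume_prod_closedBall (x : ℝ × ℝ) {r : ℝ} (hr : 0 ≤ r) :
    volume (closedBall x r) = ENNReal.ofReal (4 * r ^ 2) := by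
  rw [← closedBall_prod_same, Measure.volume_eq_prod, Measure.prod_prod, Real.volume_closedBall,
    Real.volume_closedBall, ← ENNReal.ofReal_mul (by linarith)]
  ring_nf

lemma one_sub_inv_le_measureReal_forall_tourLength_ge {n : ℕ} (hn : 2 ≤ n) {Ω : Type*}
    [MeasurableSpace Ω] {μ : Measure Ω} [IsProbabilityMeasure μ] {P : Fin n → Ω → ℝ × ℝ}
    (hm : ∀ i, Measurable (P i)) (hind : iIndepFun P μ)
    (hmap : ∀ i, μ.map (P i) = volume.restrict unitSquare) :
    1 - (n : ℝ)⁻¹ ≤ μ.real {ω | ∀ σ : Equiv.Perm (Fin n),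
      1 / 16 * √n ≤ tourLength (fun i => P i ω) σ} := by
  have hn0 : (0 : ℝ) < n := by exact_mod_cast (by omega : 0 < n)
  set r := 1 / (8 * √n)
  have hr : 0 ≤ r := by positivity
  have hrn : r * n = √n / 8 := by
    rw [div_mul_eq_mul_div, one_mul, div_eq_div_iff (by positivity) (by norm_num)]
    linear_combination (-8 : ℝ) * Real.mul_self_sqrt hn0.le
  have hc : (16 * n : ℝ)⁻¹ = 4 * r ^ 2 := by
    rw [div_pow, mul_pow, Real.sq_sqrt hn0.le]; ring
  have hball : ∀ i x, μ.map (P i) (closedBall x r) ≤ ENNReal.ofReal (16 * n)⁻¹ := fun i x => by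
    rw [hmap i, hc, ← Real.volume_prod_closedBall x hr]
    exact Measure.restrict_apply_le _ _
  set bad := {ω | card (Fin n) ^ 2 * (16 * n : ℝ)⁻¹ + 3 * n / 8
    ≤ #(closePairs (fun i => P i ω) r)}
  have hbad : μ bad ≤ ENNReal.ofReal n⁻¹ :=
    (measure_le_card_closePairs_le hm hind (by positivity) hball (by positivity)).trans_eq
      (by rw [Fintype.card_fin]; field_simp; ring_nf)
  have hgood : badᶜ ⊆ {ω | ∀ σ : Equiv.Perm (Fin n),
      1 / 16 * √n ≤ tourLength (fun i => P i ω) σ} := fun ω hω σ => by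
    have hX : (#(closePairs (fun i => P i ω) r) : ℝ) < 7 / 16 * n := by
      simp only [bad, Set.mem_compl_iff, Set.mem_ofPred_eq, not_le, Fintype.card_fin] at hω
      field_simp at hω ⊢
      linarith
    calc 1 / 16 * √n ≤ r * (9 / 16 * n) := by
          rw [← mul_assoc, mul_comm r, mul_assoc, hrn]; linarith [Real.sqrt_nonneg n]
      _ ≤ r * (n - #(closePairs (fun i => P i ω) r)) := by gcongr; linarith
      _ ≤ _ := mul_sub_card_closePairs_le_tourLength hn _ σ hr
  have hmeas : NullMeasurableSet bad μ := aestronglyMeasurable_const.nullMeasurableSet_le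
    (memLp_card_closePairs hm).aestronglyMeasurable
  calc 1 - (n : ℝ)⁻¹ ≤ 1 - μ.real bad := by
        gcongr; exact ENNReal.toReal_le_of_le_ofReal (by positivity) hbad
    _ = μ.real badᶜ := (probReal_compl_eq_one_sub₀ hmeas).symm
    _ ≤ _ := measureReal_mono hgood

/-- There is a constant `c₁ > 0` such that, with probability `1 - o(1)` as `n → ∞`,
every tour through `n` points drawn independently and uniformly at random from the unit
square has total Euclidean length at least `c₁·√n`. -/
theorem tsp_tour_length_lower_bound :
    ∃ c₁ : ℝ, 0 < c₁ ∧ ∀ δ : ℝ, 0 < δ → ∃ N : ℕ, ∀ n : ℕ, N ≤ n →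
      ∀ (Ω : Type) (_ : MeasurableSpace Ω) (μ : Measure Ω), IsProbabilityMeasure μ →
      ∀ P : Fin n → Ω → ℝ × ℝ, (∀ i, Measurable (P i)) →
      iIndepFun P μ →
      (∀ i, Measure.map (P i) μ = volume.restrict unitSquare) →
      1 - δ ≤ (μ {ω | ∀ σ : Equiv.Perm (Fin n),
          c₁ * Real.sqrt n ≤ tourLength (fun i => P i ω) σ}).toReal := by
  refine ⟨1 / 16, by norm_num, fun δ hδ => ⟨⌈δ⁻¹⌉₊ + 2, fun n hN Ω _ μ _ P hm hind hmap => ?_⟩⟩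
  have hδn : (n : ℝ)⁻¹ ≤ δ := inv_le_of_inv_le₀ hδ
    ((Nat.le_ceil _).trans (by exact_mod_cast (Nat.le_add_right _ 2).trans hN))
  exact (sub_le_sub_left hδn 1).trans
    (one_sub_inv_le_measureReal_forall_tourLength_ge (by omega) hm hind hmap)
end

section
/- In the planted clique model with clique size k ≥ a·√(n·log n) for a sufficiently large constant a, with probability 1−o(1) as n → ∞, every vertex of the planted clique has degree strictly greater than every vertex outside the planted clique; hence the k highest-degree vertices are exactly the planted clique. -/
/-!
A vertex outside `Q` has degree `Bin(n - 1, 1/2)` and a vertex of `Q` has degree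
`k - 1 + Bin(n - k, 1/2)`. By Hoeffding's inequality each of these binomial counts deviates from
its mean by `t` in the harmful direction with probability at most `exp (-2 t² / n)`, which is
`n⁻²` for `t = √(n log n)`; a union bound over the `n` vertices leaves failure probability `1/n`.
Off these events every degree outside `Q` is below `(n - 1)/2 + t` and every degree in `Q`
is above `k - 1 + (n - k)/2 - t`, which is larger as soon as `k ≥ 4t + 1`.
-/

open MeasureTheory ProbabilityTheory

/-- Index type for the potential edges of a graph on vertex set `Fin n`. -/
def EdgeIdx (n : ℕ) := {p : Fin n × Fin n // p.1 < p.2}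

instance (n : ℕ) : Fintype (EdgeIdx n) := by unfold EdgeIdx; infer_instance

/-- Adjacency in the planted clique model: `u` and `v` are adjacent at `ω` if they are
distinct and either both lie in the planted clique `Q`, or their edge is present in the
underlying `G(n,1/2)` sample. -/
def plantedAdj {Ω : Type*} {n : ℕ} (A : EdgeIdx n → Set Ω) (Q : Finset (Fin n))
    (ω : Ω) (u v : Fin n) : Prop :=
  u ≠ v ∧ ((u ∈ Q ∧ v ∈ Q) ∨ ∃ e : EdgeIdx n, (e.val = (u, v) ∨ e.val = (v, u)) ∧ ω ∈ A e)

open Classical in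
/-- The degree of vertex `v` in the planted clique model at sample `ω`. -/
noncomputable def plantedDegree {Ω : Type*} {n : ℕ} (A : EdgeIdx n → Set Ω)
    (Q : Finset (Fin n)) (ω : Ω) (v : Fin n) : ℕ :=
  (Finset.univ.filter fun u : Fin n => plantedAdj A Q ω u v).card

open Finset Real
open scoped NNReal

namespace ProbabilityTheory

lemma HasSubgaussianMGF.mono {Ω : Type*} [MeasurableSpace Ω] {μ : Measure Ω} {X : Ω → ℝ}
    {c d : ℝ≥0} (h : HasSubgaussianMGF X c μ) (hcd : c ≤ d) : HasSubgaussianMGF X d μ :=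
  ⟨h.integrable_exp_mul, fun t => (h.mgf_le t).trans (by gcongr)⟩

variable {Ω ι : Type*} [MeasurableSpace Ω] {μ : Measure Ω} [IsProbabilityMeasure μ]

lemma hasSubgaussianMGF_indicator_sub_half {B : Set Ω} (hB : MeasurableSet B)
    (hμB : μ B = 1 / 2) : HasSubgaussianMGF (fun ω => B.indicator 1 ω - 1 / 2) (1 / 4) μ := by
  have hX := hasSubgaussianMGF_of_mem_Icc (μ := μ) (X := B.indicator 1) (a := 0) (b := 1)
    (measurable_one.indicator hB).aemeasurable
    (ae_of_all _ fun ω => ⟨Set.indicator_nonneg (fun _ _ => zero_le_one) ω,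
      Set.indicator_le_self' (fun _ _ => zero_le_one) ω⟩)
  have hmean : μ[(B.indicator 1 : Ω → ℝ)] = 1 / 2 := by
    simp [integral_indicator_one hB, measureReal_def, hμB]
  rw [hmean] at hX
  convert hX using 1
  norm_num

open Classical in
lemma hasSubgaussianMGF_card_filter_sub_half {A : ι → Set Ω} (hA : ∀ i, MeasurableSet (A i))
    (hind : iIndepSet A μ) (hμA : ∀ i, μ (A i) = 1 / 2) (s : Finset ι) :
    HasSubgaussianMGF (fun ω => (#{i ∈ s | ω ∈ A i} : ℝ) - #s / 2) (#s / 4) μ := by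
  have hsum := HasSubgaussianMGF.sum_of_iIndepFun
    (hind.iIndepFun_indicator.comp (fun _ x => x - 1 / 2) fun _ => measurable_id.sub_const _)
    (s := s) fun i _ => hasSubgaussianMGF_indicator_sub_half (hA i) (hμA i)
  convert hsum using 2 with ω
  · simp only [Function.comp_apply, Set.indicator_apply, sum_sub_distrib, sum_boole, sum_const,
      nsmul_eq_mul]
    ring
  · simp [div_eq_mul_inv]

variable {A : ι → Set Ω} {s : Finset ι} {m : ℕ} {t : ℝ}

open Classical in
lemma measureReal_card_filter_ge_le (hA : ∀ i, MeasurableSet (A i)) (hind : iIndepSet A μ)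
    (hμA : ∀ i, μ (A i) = 1 / 2) (hs : #s ≤ m) (ht : 0 ≤ t) :
    μ.real {ω | #s / 2 + t ≤ (#{i ∈ s | ω ∈ A i} : ℝ)} ≤ exp (-2 * t ^ 2 / m) := by
  have hX := (hasSubgaussianMGF_card_filter_sub_half hA hind hμA s).mono
    (d := m / 4) (by gcongr)
  convert hX.measure_ge_le ht using 2
  · simp [le_sub_iff_add_le']
  · push_cast
    rw [show 2 * ((m : ℝ) / 4) = m / 2 by ring, div_div_eq_mul_div]
    ring

open Classical in
lemma measureReal_card_filter_le_le (hA : ∀ i, MeasurableSet (A i)) (hind : iIndepSet A μ)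
    (hμA : ∀ i, μ (A i) = 1 / 2) (hs : #s ≤ m) (ht : 0 ≤ t) :
    μ.real {ω | (#{i ∈ s | ω ∈ A i} : ℝ) ≤ #s / 2 - t} ≤ exp (-2 * t ^ 2 / m) := by
  have hX := ((hasSubgaussianMGF_card_filter_sub_half hA hind hμA s).mono
    (d := m / 4) (by gcongr)).neg
  convert hX.measure_ge_le ht using 2
  · simp [le_sub_comm]
  · push_cast
    rw [show 2 * ((m : ℝ) / 4) = m / 2 by ring, div_div_eq_mul_div]
    ring

end ProbabilityTheory

namespace EdgeIdx

variable {n : ℕ} {u v : Fin n}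

def ofNe (h : u ≠ v) : EdgeIdx n := ⟨(min u v, max u v), min_lt_max.2 h⟩

lemma eq_ofNe_iff (h : u ≠ v) (e : EdgeIdx n) :
    e = ofNe h ↔ e.val = (u, v) ∨ e.val = (v, u) := by
  obtain ⟨⟨a, b⟩, hab⟩ := e
  change a < b at hab
  rcases h.lt_or_gt with huv | hvu
  · simp only [ofNe, min_eq_left huv.le, max_eq_right huv.le, Prod.mk.injEq]
    grind
  · simp only [ofNe, min_eq_right hvu.le, max_eq_left hvu.le, Prod.mk.injEq]
    grind

lemma ofNe_injective (v : Fin n) :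
    Function.Injective fun w : {w // w ≠ v} => ofNe w.2 := by
  rintro ⟨w, hw⟩ ⟨w', hw'⟩ h
  have hval := (eq_ofNe_iff hw (ofNe hw')).1 h.symm
  have hval' := (eq_ofNe_iff hw' (ofNe hw')).1 rfl
  ext
  grind

end EdgeIdx

open EdgeIdx

lemma card_filter_val_mem {α : Type*} [Fintype α] [DecidableEq α] (v : α) (s : Finset α) :
    #{w : {w // w ≠ v} | w.1 ∈ s} = #(s.erase v) := by
  rw [← card_map (Function.Embedding.subtype _)]
  congr 1
  ext x
  simp [and_comm]

/-- Candidate neighbours of `v` are indexed by `{w // w ≠ v}`, so that the edge `ofNe w.2`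
joining `w` to `v` is defined. -/
def outsideVertices {n : ℕ} (Q : Finset (Fin n)) (v : Fin n) : Finset {w : Fin n // w ≠ v} :=
  {w | w.1 ∉ Q}

lemma card_outsideVertices {n : ℕ} {Q : Finset (Fin n)} {v : Fin n} (hv : v ∈ Q) :
    #(outsideVertices Q v) = n - #Q := by
  simp_rw [outsideVertices, ← mem_compl, card_filter_val_mem,
    erase_eq_of_notMem (notMem_compl.2 hv), card_compl, Fintype.card_fin]

section PlantedDegree

open Classical

variable {Ω : Type*} {n : ℕ} (A : EdgeIdx n → Set Ω) (Q : Finset (Fin n)) (ω : Ω)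
  {u v : Fin n}

lemma plantedAdj_iff (h : u ≠ v) :
    plantedAdj A Q ω u v ↔ (u ∈ Q ∧ v ∈ Q) ∨ ω ∈ A (ofNe h) := by
  simp only [plantedAdj, h, ne_eq, not_false_eq_true, true_and, ← eq_ofNe_iff h, exists_eq_left]

lemma plantedDegree_eq_card (v : Fin n) :
    plantedDegree A Q ω v =
      #{w : {w // w ≠ v} | (w.1 ∈ Q ∧ v ∈ Q) ∨ ω ∈ A (ofNe w.2)} := by
  rw [plantedDegree, ← card_map (Function.Embedding.subtype _)]
  congr 1
  ext x
  simp only [mem_map, mem_filter, mem_univ, true_and, Function.Embedding.subtype_apply]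
  by_cases hx : x = v
  · simp [plantedAdj, hx]
  · simp [plantedAdj_iff A Q ω hx, hx]

lemma plantedDegree_of_notMem (hu : u ∉ Q) :
    plantedDegree A Q ω u = #{w : {w // w ≠ u} | ω ∈ A (ofNe w.2)} := by
  simp [plantedDegree_eq_card, hu]

lemma plantedDegree_of_mem (hv : v ∈ Q) :
    plantedDegree A Q ω v =
      (#Q - 1) + #{w ∈ outsideVertices Q v | ω ∈ A (ofNe w.2)} := by
  rw [plantedDegree_eq_card, ← card_filter_add_card_filter_not (fun w => w.1 ∈ Q),
    filter_filter, filter_filter, ← card_erase_of_mem hv, ← card_filter_val_mem v Q]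
  congr 2 <;> ext w <;> simp only [outsideVertices, mem_filter, mem_univ, true_and] <;> tauto

lemma plantedDegree_lt_of_concentrated {t : ℝ} (hQ : 4 * t + 1 ≤ #Q) (hu : u ∉ Q)
    (hv : v ∈ Q)
    (hu' : (#{w : {w // w ≠ u} | ω ∈ A (ofNe w.2)} : ℝ) <
      #(univ : Finset {w // w ≠ u}) / 2 + t)
    (hv' : (#(outsideVertices Q v) : ℝ) / 2 - t <
      #{w ∈ outsideVertices Q v | ω ∈ A (ofNe w.2)}) :
    plantedDegree A Q ω u < plantedDegree A Q ω v := by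
  have hk : 1 ≤ #Q := card_pos.2 ⟨v, hv⟩
  have hkn : #Q ≤ n := by simpa using card_le_univ Q
  have hn1 : #(univ : Finset {w // w ≠ u}) = n - 1 := by simp
  rw [hn1, Nat.cast_sub (hk.trans hkn)] at hu'
  rw [card_outsideVertices hv, Nat.cast_sub hkn] at hv'
  rw [plantedDegree_of_notMem A Q ω hu, plantedDegree_of_mem A Q ω hv,
    ← Nat.cast_lt (α := ℝ)]
  push_cast [hk]
  linarith

end PlantedDegree

section Probability

open Classical

variable {Ω : Type*} [MeasurableSpace Ω] {μ : Measure Ω} [IsProbabilityMeasure μ] {n : ℕ}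
  {A : EdgeIdx n → Set Ω}

lemma one_sub_mul_exp_le_measureReal_plantedDegree_lt (hA : ∀ e, MeasurableSet (A e))
    (hind : iIndepSet A μ) (hμA : ∀ e, μ (A e) = 1 / 2) {Q : Finset (Fin n)} {t : ℝ}
    (ht : 0 ≤ t) (hQ : 4 * t + 1 ≤ #Q) :
    1 - n * exp (-2 * t ^ 2 / n) ≤
      μ.real {ω | ∀ v ∈ Q, ∀ u ∉ Q, plantedDegree A Q ω u < plantedDegree A Q ω v} := by
  set good := {ω | ∀ v ∈ Q, ∀ u ∉ Q, plantedDegree A Q ω u < plantedDegree A Q ω v}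
  let bad : Fin n → Set Ω := fun v => if v ∈ Q then
      {ω | (#{w ∈ outsideVertices Q v | ω ∈ A (ofNe w.2)} : ℝ) ≤
        #(outsideVertices Q v) / 2 - t}
    else
      {ω | (#(univ : Finset {w // w ≠ v}) : ℝ) / 2 + t ≤
        #{w : {w // w ≠ v} | ω ∈ A (ofNe w.2)}}
  have hbad : ∀ v, μ.real (bad v) ≤ exp (-2 * t ^ 2 / n) := by
    intro v
    have hAv : ∀ w : {w // w ≠ v}, MeasurableSet (A (ofNe w.2)) := fun w => hA _
    have hind_v := hind.precomp (ofNe_injective v)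
    have hμAv : ∀ w : {w // w ≠ v}, μ (A (ofNe w.2)) = 1 / 2 := fun w => hμA _
    have hcard : ∀ s : Finset {w // w ≠ v}, #s ≤ n := fun s =>
      (card_le_univ s).trans ((Fintype.card_subtype_le _).trans_eq (Fintype.card_fin n))
    by_cases hv : v ∈ Q
    · simp only [bad, if_pos hv]
      exact measureReal_card_filter_le_le hAv hind_v hμAv (hcard _) ht
    · simp only [bad, if_neg hv]
      exact measureReal_card_filter_ge_le hAv hind_v hμAv (hcard _) ht
  have hgood : (⋃ v, bad v)ᶜ ⊆ good := by
    intro ω hω v hv u hu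
    simp only [Set.mem_compl_iff, Set.mem_iUnion, not_exists] at hω
    have hωu := hω u
    have hωv := hω v
    simp only [bad, hu, hv, if_true, if_false, Set.mem_ofPred_eq, not_le] at hωu hωv
    exact plantedDegree_lt_of_concentrated A Q ω hQ hu hv hωu hωv
  calc 1 - n * exp (-2 * t ^ 2 / n)
      ≤ 1 - μ.real (⋃ v, bad v) := by
        gcongr
        calc μ.real (⋃ v, bad v) ≤ ∑ v, μ.real (bad v) := measureReal_iUnion_fintype_le bad
          _ ≤ ∑ _v : Fin n, exp (-2 * t ^ 2 / n) := sum_le_sum fun v _ => hbad v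
          _ = n * exp (-2 * t ^ 2 / n) := by simp
    _ ≤ μ.real good := by
        have := measureReal_union_le (μ := μ) (⋃ v, bad v) (⋃ v, bad v)ᶜ
        rw [Set.union_compl_self, probReal_univ] at this
        linarith [measureReal_mono (μ := μ) hgood]

end Probability

/-- In the planted clique model with clique size `k ≥ a·√(n·log n)` for a sufficiently
large constant `a`, with probability `1 - o(1)` as `n → ∞`, every vertex of the planted
clique has strictly larger degree than every vertex outside it — hence the `k`
highest-degree vertices are exactly the planted clique. -/
theorem planted_clique_top_degrees :
    ∃ a : ℝ, 0 < a ∧ ∀ δ : ℝ, 0 < δ → ∃ N : ℕ, ∀ n : ℕ, N ≤ n → ∀ k : ℕ,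
      a * Real.sqrt (n * Real.log n) ≤ k → k ≤ n →
      ∀ (Ω : Type) (_ : MeasurableSpace Ω) (μ : Measure Ω), IsProbabilityMeasure μ →
      ∀ A : EdgeIdx n → Set Ω, (∀ e, MeasurableSet (A e)) →
      iIndepSet A μ → (∀ e, μ (A e) = 1/2) →
      ∀ Q : Finset (Fin n), Q.card = k →
      1 - δ ≤ (μ {ω | ∀ v ∈ Q, ∀ u ∉ Q,
          plantedDegree A Q ω u < plantedDegree A Q ω v}).toReal := by
  refine ⟨5, by norm_num, fun δ hδ => ⟨max 3 ⌈δ⁻¹⌉₊,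
    fun n hn k hk _ Ω _ μ _ A hA hind hμA Q hQ => ?_⟩⟩
  have hn3 : (3 : ℝ) ≤ n := by exact_mod_cast (le_max_left _ _).trans hn
  have hδn : (n : ℝ)⁻¹ ≤ δ := inv_le_of_inv_le₀ hδ
    ((Nat.le_ceil _).trans (by exact_mod_cast (le_max_right _ _).trans hn))
  have hlog : 1 ≤ log n := by
    rw [le_log_iff_exp_le (by linarith)]
    linarith [exp_one_lt_d9]
  set t := √(n * log n)
  have ht : 1 ≤ t := one_le_sqrt.2 (by nlinarith)
  have hexp : n * exp (-2 * t ^ 2 / n) = (n : ℝ)⁻¹ := by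
    rw [sq_sqrt (by positivity), show -2 * (n * log n) / n = -(log n + log n) by field_simp; ring,
      exp_neg, exp_add, exp_log (by positivity)]
    field_simp
  calc 1 - δ ≤ 1 - n * exp (-2 * t ^ 2 / n) := by linarith
    _ ≤ _ := one_sub_mul_exp_le_measureReal_plantedDegree_lt hA hind hμA (by positivity)
      (by rw [hQ]; linarith)
end
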